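/- Pathwise superhedging inequality H^II: for any continuous path (S_t)_{t∈[0,T]} with b̲ < S_0 < b̄ and any K < b̄, one has 1{S̄_T ≥ b̄, S̲_T ≤ b̲} ≤ (S_T−K)^+/(b̄−K) + (b̄−S_T)/(b̄−K)·1{S̄_T ≥ b̄}. -/

import Mathlib

open Set
open scoped Classical

lemma one_le_max_sub_div_add_sub_div {x K b : ℝ} (hK : K < b) :
    1 ≤ max (x - K) 0 / (b - K) + (b - x) / (b - K) := by
  rw [← add_div, one_le_div (sub_pos.2 hK)]
  linarith [le_max_left (x - K) 0]

theorem stmt3_general (T lb ub K : ℝ) (S : ℝ → ℝ)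
    (hK : K < ub) :
    (if ub ≤ sSup (S '' Set.Icc 0 T) ∧ sInf (S '' Set.Icc 0 T) ≤ lb
      then (1 : ℝ) else 0)
      ≤ max (S T - K) 0 / (ub - K)
        + (ub - S T) / (ub - K) *
          (if ub ≤ sSup (S '' Set.Icc 0 T) then (1 : ℝ) else 0) := by
  by_cases hup : ub ≤ sSup (S '' Set.Icc 0 T)
  · rw [if_pos hup, mul_one]
    exact (ite_le_one le_rfl zero_le_one).trans (one_le_max_sub_div_add_sub_div hK)
  · rw [if_neg (fun h => hup h.1), if_neg hup, mul_zero, add_zero]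
    exact div_nonneg (le_max_right _ _) (sub_pos.2 hK).le

/-- Pathwise superhedging inequality H^II for the double touch option. -/
theorem stmt3 (T lb ub K : ℝ) (S : ℝ → ℝ)
    (hT : 0 < T) (hcont : ContinuousOn S (Set.Icc 0 T))
    (hlb : 0 < lb) (h1 : lb < S 0) (h2 : S 0 < ub)
    (hK0 : 0 < K) (hK : K < ub) :
    (if ub ≤ sSup (S '' Set.Icc 0 T) ∧ sInf (S '' Set.Icc 0 T) ≤ lb
      then (1 : ℝ) else 0)
      ≤ max (S T - K) 0 / (ub - K)
        + (ub - S T) / (ub - K) *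
          (if ub ≤ sSup (S '' Set.Icc 0 T) then (1 : ℝ) else 0) :=
  stmt3_general T lb ub K S hK
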